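/- Let N be an abelian group, M ≤ N a subgroup, and x ∈ M an element such that the quotient M / ⟨x⟩ is torsion-free (x is primitive in M). Suppose every torsion element of N / M has order a power of a prime p, and suppose that if x = n • y for some y ∈ N and integer n > 1, then n² divides a fixed positive integer 2d with p > 2d. Then x is primitive in N: the quotient N / ⟨x⟩ has no torsion element of order dividing any n with 1 < n, i.e., x is not a proper multiple of any element of N. -/
import Mathlib


/-- Primitivity descends: if x is primitive in M, every torsion element of N/M has
p-power order, any n > 1 dividing x forces n² ∣ 2d, and p > 2d > 0, then x is not a
proper multiple of any element of N. -/
theorem stmt_10 (N : Type*) [AddCommGroup N] (M : AddSubgroup N) (p d : ℕ)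
    (hp : p.Prime) (hd : 0 < d) (hpd : 2 * d < p)
    (x : N) (hxM : x ∈ M)
    (hprimM : ∀ (n : ℕ) (y : N), y ∈ M → 0 < n → x = n • y → n = 1)
    (htors : ∀ z : N ⧸ M, IsOfFinAddOrder z → ∃ k : ℕ, addOrderOf z = p ^ k)
    (hdiv : ∀ (n : ℕ) (y : N), 1 < n → x = n • y → n ^ 2 ∣ 2 * d) :
    ¬ ∃ (n : ℕ) (y : N), 1 < n ∧ x = n • y := by
  rintro ⟨n, y, hn, hxy⟩
  set z : N ⧸ M := QuotientAddGroup.mk y with hz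
  have hnz : n • z = 0 := by
    have : ((n • y : N) : N ⧸ M) = 0 := by
      rw [← hxy]; exact (QuotientAddGroup.eq_zero_iff x).mpr hxM
    simpa [hz] using this
  have hfin : IsOfFinAddOrder z :=
    isOfFinAddOrder_iff_nsmul_eq_zero.mpr ⟨n, by omega, hnz⟩
  obtain ⟨k, hk⟩ := htors z hfin
  have hord : addOrderOf z ∣ n := addOrderOf_dvd_of_nsmul_eq_zero hnz
  rcases Nat.eq_zero_or_pos k with hk0 | hkpos
  · -- z = 0, so y ∈ M
    have hz1 : addOrderOf z = 1 := by simp [hk, hk0]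
    have hyM : y ∈ M := by
      have : z = 0 := AddMonoid.addOrderOf_eq_one_iff.mp hz1
      exact (QuotientAddGroup.eq_zero_iff y).mp this
    have := hprimM n y hyM (by omega) hxy
    omega
  · have hpn : p ∣ n := by
      refine dvd_trans ?_ hord
      rw [hk]
      exact dvd_pow_self p (by omega)
    have hn2 : n ^ 2 ∣ 2 * d := hdiv n y hn hxy
    have hle : n ^ 2 ≤ 2 * d := Nat.le_of_dvd (by omega) hn2
    have hpn' : p ≤ n := Nat.le_of_dvd (by omega) hpn
    nlinarith
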